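/- arXiv:1807.03525 — 2 statements merged into one kernel-verified Lean document; each statement's English description precedes it below -/
import Mathlib

section
/- If n ≥ 5 and n ≡ 3, 5, 7, 11, 19, 20, 22 or 26 (mod 31), then the largest minimum weight among all binary LCD [n,5] codes equals ⌊16n/31⌋ − 1. -/
/-- The (Hamming) weight of a vector over `F_2`. -/
def wt {n : ℕ} (x : Fin n → ZMod 2) : ℕ :=
  Finset.card (Finset.univ.filter fun i => x i ≠ 0)

/-- The dual code of a binary code `C`, with respect to the standard inner product. -/
def dualCode {n : ℕ} (C : Submodule (ZMod 2) (Fin n → ZMod 2)) :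
    Submodule (ZMod 2) (Fin n → ZMod 2) where
  carrier := {x | ∀ y ∈ C, ∑ i, x i * y i = 0}
  add_mem' := by
    intro a b ha hb y hy
    simp [Pi.add_apply, add_mul, Finset.sum_add_distrib, ha y hy, hb y hy]
  zero_mem' := by
    intro y hy
    simp
  smul_mem' := by
    intro c a ha y hy
    simp only [Pi.smul_apply, smul_eq_mul, mul_assoc, ← Finset.mul_sum, ha y hy, mul_zero]

/-- A binary code is linear complementary dual (LCD) if it meets its dual trivially. -/
def IsLCD {n : ℕ} (C : Submodule (ZMod 2) (Fin n → ZMod 2)) : Prop :=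
  C ⊓ dualCode C = ⊥

/-- The minimum weight of a binary code: the smallest weight of a nonzero codeword. -/
noncomputable def minWt {n : ℕ} (C : Submodule (ZMod 2) (Fin n → ZMod 2)) : ℕ :=
  sInf {w | ∃ x ∈ C, x ≠ 0 ∧ wt x = w}

/-- `dLCD n k` is the largest minimum weight among all binary LCD `[n,k]` codes. -/
noncomputable def dLCD (n k : ℕ) : ℕ :=
  sSup {d | ∃ C : Submodule (ZMod 2) (Fin n → ZMod 2),
    Module.finrank (ZMod 2) C = k ∧ IsLCD C ∧ minWt C = d}



def wt' {ι : Type} [Fintype ι] (x : ι → ZMod 2) : ℕ :=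
  Finset.card (Finset.univ.filter fun i => x i ≠ 0)

lemma card_split {ι : Type} [Fintype ι] (P Q : ι → Prop) [DecidablePred P] [DecidablePred Q] :
    (Finset.univ.filter fun i => P i ∧ Q i).card
      + (Finset.univ.filter fun i => P i ∧ ¬ Q i).card
      = (Finset.univ.filter P).card := by
  rw [← Finset.filter_filter, ← Finset.filter_filter]
  exact Finset.card_filter_add_card_filter_not Q

lemma griesmer : ∀ (k : ℕ) (ι : Type) [Fintype ι] (C : Submodule (ZMod 2) (ι → ZMod 2)) (d : ℕ),
    k ≤ Module.finrank (ZMod 2) C →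
    (∀ y ∈ C, y ≠ 0 → d ≤ wt' y) →
    ∑ i ∈ Finset.range k, (d + 2 ^ i - 1) / 2 ^ i ≤ Fintype.card ι := by
  intro k
  induction k with
  | zero => intros; simp
  | succ k ih =>
    intro ι _ C d hk hd
    classical
    have hex : ∃ y, y ∈ C ∧ y ≠ 0 := by
      by_contra hcon
      push_neg at hcon
      have hbot : C = ⊥ := by
        rw [Submodule.eq_bot_iff]; intro y hy; exact hcon y hy
      rw [hbot, finrank_bot] at hk; omega
    set S : Set ℕ := {w | ∃ y, (y ∈ C ∧ y ≠ 0) ∧ wt' y = w} with hSdef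
    have hSne : S.Nonempty := ⟨wt' hex.choose, hex.choose, hex.choose_spec, rfl⟩
    obtain ⟨x, ⟨hxC, hx0⟩, hxw⟩ := Nat.sInf_mem hSne
    set w := sInf S with hw
    have hmin : ∀ y ∈ C, y ≠ 0 → w ≤ wt' y := fun y hy h0 => Nat.sInf_le ⟨y, ⟨hy, h0⟩, rfl⟩
    have hdw : d ≤ w := hxw ▸ hd x hxC hx0
    -- the residual code
    set ι' := {i : ι // x i = 0} with hι'
    set r : (ι → ZMod 2) →ₗ[ZMod 2] (ι' → ZMod 2) :=
      LinearMap.funLeft (ZMod 2) (ZMod 2) (fun i : ι' => (i : ι)) with hr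
    set f : C →ₗ[ZMod 2] (ι' → ZMod 2) := r.comp C.subtype with hf
    -- cardinality
    have hcard : Fintype.card ι = w + Fintype.card ι' := by
      rw [Fintype.card_subtype]
      have h1 := Finset.card_filter_add_card_filter_not
        (s := (Finset.univ : Finset ι)) (p := fun i => x i ≠ 0)
      have h2 : (Finset.univ.filter fun i : ι => x i = 0)
          = (Finset.univ.filter fun i : ι => ¬ x i ≠ 0) := by
        apply Finset.filter_congr; intro i _; simp
      rw [h2, ← Finset.card_univ, ← h1, ← hxw]
      rfl
    -- kernel of restriction
    have hker : ∀ z : C, f z = 0 → (z : ι → ZMod 2) = 0 ∨ (z : ι → ZMod 2) = x := by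
      rintro ⟨y, hyC⟩ hz
      by_cases hy0 : y = 0
      · left; exact hy0
      · right
        have hzero : ∀ i : ι, x i = 0 → y i = 0 := by
          intro i hi
          exact congrFun hz ⟨i, hi⟩
        have hsub : (Finset.univ.filter fun i : ι => y i ≠ 0)
            ⊆ (Finset.univ.filter fun i : ι => x i ≠ 0) := by
          intro i hi
          simp only [Finset.mem_filter, Finset.mem_univ, true_and] at hi ⊢
          intro hxi0
          exact hi (hzero i hxi0)
        have hcardle : (Finset.univ.filter fun i : ι => x i ≠ 0).card
            ≤ (Finset.univ.filter fun i : ι => y i ≠ 0).card := by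
          have := hmin y hyC hy0
          rw [← hxw] at this
          exact this
        have heq := Finset.eq_of_subset_of_card_le hsub hcardle
        funext i
        have hiff : (y i ≠ 0) ↔ (x i ≠ 0) := by
          constructor
          · intro h
            have := hsub (Finset.mem_filter.mpr ⟨Finset.mem_univ i, h⟩)
            simpa using this
          · intro h
            have : i ∈ (Finset.univ.filter fun i : ι => y i ≠ 0) := by
              rw [heq]; simp [h]
            simpa using this
        exact (by decide : ∀ a b : ZMod 2, (a ≠ 0 ↔ b ≠ 0) → a = b) _ _ hiff
    -- rank of residual
    have hrank : k ≤ Module.finrank (ZMod 2) (LinearMap.range f) := by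
      have hxC0 : (⟨x, hxC⟩ : C) ≠ 0 := by
        intro h; exact hx0 (congrArg Subtype.val h)
      have hle : LinearMap.ker f ≤ Submodule.span (ZMod 2) {(⟨x, hxC⟩ : C)} := by
        intro z hz
        rcases hker z (by simpa using hz) with h | h
        · have : z = 0 := Subtype.ext h
          rw [this]; exact Submodule.zero_mem _
        · have : z = ⟨x, hxC⟩ := Subtype.ext h
          rw [this]; exact Submodule.mem_span_singleton_self _
      have h1 : Module.finrank (ZMod 2) (LinearMap.ker f) ≤ 1 := by
        calc Module.finrank (ZMod 2) (LinearMap.ker f)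
            ≤ Module.finrank (ZMod 2) (Submodule.span (ZMod 2) {(⟨x, hxC⟩ : C)}) :=
              Submodule.finrank_mono hle
          _ = 1 := finrank_span_singleton hxC0
      have h2 := LinearMap.finrank_range_add_finrank_ker f
      omega
    -- residual minimum distance
    have hres : ∀ z ∈ LinearMap.range f, z ≠ 0 → (w + 1) / 2 ≤ wt' z := by
      rintro z ⟨⟨y, hyC⟩, rfl⟩ hz0
      have hy0 : y ≠ 0 := by
        intro h; apply hz0; subst h
        funext i'; rfl
      have hyx : y ≠ x := by
        intro h; apply hz0; subst h
        funext i'; exact i'.2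
      have hxy0 : x + y ≠ 0 := by
        intro hxy
        apply hyx
        funext i
        exact (by decide : ∀ a b : ZMod 2, a + b = 0 → b = a) _ _ (congrFun hxy i)
      -- weights
      have F1 := card_split (fun i : ι => y i ≠ 0) (fun i : ι => x i ≠ 0)
      have F3 := card_split (fun i : ι => x i ≠ 0) (fun i : ι => y i ≠ 0)
      have F2 := card_split (fun i : ι => (x + y) i ≠ 0) (fun i : ι => x i ≠ 0)
      -- convert F2's filters
      have e1 : (Finset.univ.filter fun i : ι => (x + y) i ≠ 0 ∧ x i ≠ 0)
          = (Finset.univ.filter fun i : ι => x i ≠ 0 ∧ ¬ y i ≠ 0) := by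
        apply Finset.filter_congr; intro i _
        have := (by decide : ∀ a b : ZMod 2, ((a + b ≠ 0) ∧ a ≠ 0 ↔ a ≠ 0 ∧ ¬ b ≠ 0)) (x i) (y i)
        simpa using this
      have e2 : (Finset.univ.filter fun i : ι => (x + y) i ≠ 0 ∧ ¬ x i ≠ 0)
          = (Finset.univ.filter fun i : ι => y i ≠ 0 ∧ ¬ x i ≠ 0) := by
        apply Finset.filter_congr; intro i _
        have := (by decide : ∀ a b : ZMod 2, ((a + b ≠ 0) ∧ ¬ a ≠ 0 ↔ b ≠ 0 ∧ ¬ a ≠ 0)) (x i) (y i)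
        simpa using this
      have ecomm : (Finset.univ.filter fun i : ι => y i ≠ 0 ∧ x i ≠ 0)
          = (Finset.univ.filter fun i : ι => x i ≠ 0 ∧ y i ≠ 0) := by
        apply Finset.filter_congr; intro i _; constructor <;> exact fun h => ⟨h.2, h.1⟩
      rw [e1, e2] at F2
      rw [ecomm] at F1
      -- wt' z = b
      have F4 : wt' (f ⟨y, hyC⟩) = (Finset.univ.filter fun i : ι => y i ≠ 0 ∧ ¬ x i ≠ 0).card := by
        unfold wt'
        rw [← Fintype.card_subtype, ← Fintype.card_subtype]
        apply Fintype.card_congr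
        exact {
          toFun := fun p => ⟨(p.1 : ι), by
            refine ⟨p.2, ?_⟩
            simpa using p.1.2⟩
          invFun := fun p => ⟨⟨(p : ι), by simpa using p.2.2⟩, p.2.1⟩
          left_inv := fun p => by ext; rfl
          right_inv := fun p => by ext; rfl }
      have hwy : w ≤ wt' y := hmin y hyC hy0
      have hwxy : w ≤ wt' (x + y) := hmin (x + y) (C.add_mem hxC hyC) hxy0
      have hxww : (Finset.univ.filter fun i : ι => x i ≠ 0).card = w := by
        rw [← hxw]; rfl
      unfold wt' at hwy hwxy
      rw [hxww] at F3
      rw [F4]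
      omega
    have hIH := ih ι' (LinearMap.range f) ((w + 1) / 2) hrank hres
    -- arithmetic assembly
    have hid : ∀ i : ℕ, ((w + 1) / 2 + 2 ^ i - 1) / 2 ^ i = (w + 2 ^ (i + 1) - 1) / 2 ^ (i + 1) := by
      intro i
      have hp : (2:ℕ) ^ (i + 1) = 2 * 2 ^ i := by ring
      have h1 : (1:ℕ) ≤ 2 ^ i := Nat.one_le_two_pow
      have h2 : (w + 1) / 2 + 2 ^ i - 1 = (w + 1) / 2 + (2 ^ i - 1) := by omega
      have h3 : (w + 1 + 2 * (2 ^ i - 1)) / 2 = (w + 1) / 2 + (2 ^ i - 1) :=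
        Nat.add_mul_div_left _ _ (by norm_num)
      have h4 : w + 1 + 2 * (2 ^ i - 1) = w + 2 ^ (i + 1) - 1 := by
        rw [hp]; omega
      rw [h2, ← h3, h4, Nat.div_div_eq_div_mul, ← hp]
    have hmono : ∀ i : ℕ, (d + 2 ^ (i + 1) - 1) / 2 ^ (i + 1) ≤ (w + 2 ^ (i + 1) - 1) / 2 ^ (i + 1) :=
      fun i => Nat.div_le_div_right (by omega)
    calc ∑ i ∈ Finset.range (k + 1), (d + 2 ^ i - 1) / 2 ^ i
        = (∑ i ∈ Finset.range k, (d + 2 ^ (i + 1) - 1) / 2 ^ (i + 1)) + (d + 2 ^ 0 - 1) / 2 ^ 0 :=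
          Finset.sum_range_succ' _ _
      _ ≤ (∑ i ∈ Finset.range k, (w + 2 ^ (i + 1) - 1) / 2 ^ (i + 1)) + d := by
          simp only [pow_zero, Nat.add_sub_cancel, Nat.div_one]
          exact Nat.add_le_add (Finset.sum_le_sum fun i _ => hmono i) le_rfl
      _ ≤ (∑ i ∈ Finset.range k, (w + 2 ^ (i + 1) - 1) / 2 ^ (i + 1)) + w := by omega
      _ = (∑ i ∈ Finset.range k, ((w + 1) / 2 + 2 ^ i - 1) / 2 ^ i) + w := by
          rw [Finset.sum_congr rfl fun i _ => (hid i).symm]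
      _ ≤ Fintype.card ι' + w := by omega
      _ = Fintype.card ι := by omega

def vec (r : ℕ) : Fin 5 → ZMod 2 := fun i => if (r / 2 ^ (i : ℕ)) % 2 = 1 then 1 else 0

def colN (L : List ℕ) (j : ℕ) : ℕ :=
  if j < L.length then L.getD j 0 else ((j - L.length) % 31) + 1

lemma colN_tail (L : List ℕ) (j : ℕ) : colN L (L.length + j) = j % 31 + 1 := by
  unfold colN
  rw [if_neg (by omega)]
  congr 2
  omega

lemma sum_period {M : Type} [AddCommMonoid M] (g : ℕ → M) (hg : ∀ t r, r < 31 → g (31 * t + r) = g r) :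
    ∀ q, ∑ j ∈ Finset.range (31 * q), g j = q • ∑ r ∈ Finset.range 31, g r := by
  intro q
  induction q with
  | zero => simp
  | succ q ihq =>
    have h31 : 31 * (q + 1) = 31 * q + 31 := by ring
    rw [h31, Finset.range_eq_Ico,
      ← Finset.sum_Ico_consecutive g (Nat.zero_le (31 * q)) (Nat.le_add_right _ 31),
      Finset.sum_Ico_eq_sum_range g (31 * q) (31 * q + 31), ← Finset.range_eq_Ico, ihq]
    have h2 : 31 * q + 31 - 31 * q = 31 := by omega
    rw [h2]
    have h3 : ∑ k ∈ Finset.range 31, g (31 * q + k) = ∑ r ∈ Finset.range 31, g r := by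
      apply Finset.sum_congr rfl
      intro r hr
      exact hg q r (Finset.mem_range.mp hr)
    rw [h3, succ_nsmul]

lemma sum_colN {M : Type} [AddCommMonoid M] (L : List ℕ) (F : ℕ → M) (q : ℕ) :
    ∑ j ∈ Finset.range (L.length + 31 * q), F (colN L j)
      = (∑ j ∈ Finset.range L.length, F (colN L j)) + q • ∑ r ∈ Finset.range 31, F (r + 1) := by
  have h2 : L.length + 31 * q - L.length = 31 * q := by omega
  rw [Finset.range_eq_Ico,
    ← Finset.sum_Ico_consecutive _ (Nat.zero_le L.length) (Nat.le_add_right _ _),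
    Finset.sum_Ico_eq_sum_range (fun j => F (colN L j)) L.length (L.length + 31 * q),
    ← Finset.range_eq_Ico, h2]
  congr 1
  have h3 : ∀ j : ℕ, F (colN L (L.length + j)) = F (j % 31 + 1) := by
    intro j; rw [colN_tail]
  calc ∑ j ∈ Finset.range (31 * q), F (colN L (L.length + j))
      = q • ∑ r ∈ Finset.range 31, F (colN L (L.length + r)) := by
        apply sum_period
        intro t r hr
        rw [colN_tail, colN_tail]
        have hmod : (31 * t + r) % 31 = r % 31 := by omega
        rw [hmod]
    _ = q • ∑ r ∈ Finset.range 31, F (r + 1) :=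
        congrArg (fun s => q • s) (Finset.sum_congr rfl fun r hr => by
          rw [colN_tail, Nat.mod_eq_of_lt (Finset.mem_range.mp hr)])

def enc (L : List ℕ) (n : ℕ) : (Fin 5 → ZMod 2) →ₗ[ZMod 2] (Fin n → ZMod 2) where
  toFun m := fun j => ∑ i, m i * vec (colN L (j : ℕ)) i
  map_add' a b := by
    funext j
    simp [add_mul, Finset.sum_add_distrib]
  map_smul' c a := by
    funext j
    simp [Finset.mul_sum, mul_assoc]

set_option maxRecDepth 10000 in
lemma blockg : ∀ i i' : Fin 5, ∑ r ∈ Finset.range 31, vec (r + 1) i * vec (r + 1) i' = 0 := by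
  decide

set_option maxRecDepth 10000 in
lemma blockw : ∀ m : Fin 5 → ZMod 2, m ≠ 0 →
    (∑ r ∈ Finset.range 31, if (∑ i, m i * vec (r + 1) i) ≠ 0 then 1 else 0 : ℕ) = 16 := by
  decide

lemma construct (L : List ℕ) (D0 : ℕ)
    (hw : ∀ m : Fin 5 → ZMod 2, m ≠ 0 →
      D0 ≤ (∑ j ∈ Finset.range L.length, if (∑ i, m i * vec (colN L j) i) ≠ 0 then 1 else 0 : ℕ))
    (hg : ∀ m : Fin 5 → ZMod 2,
      (∀ i' : Fin 5, (∑ i, m i * (∑ j ∈ Finset.range L.length, vec (colN L j) i * vec (colN L j) i')) = 0) → m = 0)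
    (q n : ℕ) (hn : n = L.length + 31 * q) :
    ∃ C : Submodule (ZMod 2) (Fin n → ZMod 2),
      Module.finrank (ZMod 2) C = 5 ∧ IsLCD C ∧
      (∀ y ∈ C, y ≠ 0 → D0 + 16 * q ≤ wt y) := by
  classical
  set e := enc L n with he
  -- the key double sum computation
  have key : ∀ m : Fin 5 → ZMod 2,
      (∀ i' : Fin 5, ∑ j : Fin n, (e m j) * vec (colN L (j : ℕ)) i' = 0) → m = 0 := by
    intro m hm
    apply hg
    intro i'
    have h1 : ∑ j : Fin n, (e m j) * vec (colN L (j : ℕ)) i'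
        = ∑ i, m i * (∑ j : Fin n, vec (colN L (j : ℕ)) i * vec (colN L (j : ℕ)) i') := by
      simp only [he, enc, LinearMap.coe_mk, AddHom.coe_mk, Finset.sum_mul, Finset.mul_sum,
        mul_assoc]
      rw [Finset.sum_comm]
    have h2 : ∀ i : Fin 5, ∑ j : Fin n, vec (colN L (j : ℕ)) i * vec (colN L (j : ℕ)) i'
        = ∑ j ∈ Finset.range L.length, vec (colN L j) i * vec (colN L j) i' := by
      intro i
      rw [Fin.sum_univ_eq_sum_range (fun j => vec (colN L j) i * vec (colN L j) i') n, hn,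
        sum_colN L (fun c => vec c i * vec c i') q, blockg i i', smul_zero, add_zero]
    have h1' : ∑ j : Fin n, (e m j) * vec (colN L (j : ℕ)) i'
        = ∑ i, m i * (∑ j ∈ Finset.range L.length, vec (colN L j) i * vec (colN L j) i') :=
      h1.trans (Finset.sum_congr rfl fun i _ => by rw [h2 i])
    rw [← h1']
    exact hm i'
  have hinj : Function.Injective e := by
    rw [injective_iff_map_eq_zero]
    intro m hm
    apply key
    intro i'
    rw [hm]
    simp
  refine ⟨LinearMap.range e, ?_, ?_, ?_⟩
  · rw [LinearMap.finrank_range_of_inj hinj, Module.finrank_pi, Fintype.card_fin]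
  · unfold IsLCD
    rw [eq_bot_iff]
    rintro x ⟨hx1, hx2⟩
    obtain ⟨m, rfl⟩ := hx1
    have hsingle : ∀ (i' : Fin 5) (j : Fin n), e (Pi.single i' 1) j = vec (colN L (j : ℕ)) i' := by
      intro i' j
      simp only [he, enc, LinearMap.coe_mk, AddHom.coe_mk]
      simp [Pi.single_apply, ite_mul, Finset.sum_ite_eq]
    have hm : ∀ i' : Fin 5, ∑ j : Fin n, (e m j) * vec (colN L (j : ℕ)) i' = 0 := by
      intro i'
      have h := hx2 (e (Pi.single i' 1)) ⟨_, rfl⟩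
      rw [← h]
      apply Finset.sum_congr rfl
      intro j _
      rw [hsingle i' j]
    have hm0 := key m hm
    rw [hm0, map_zero]
    exact Submodule.zero_mem ⊥
  · rintro y ⟨m, rfl⟩ hy0
    have hm0 : m ≠ 0 := by
      rintro rfl
      rw [map_zero] at hy0
      exact hy0 rfl
    have hwt : wt (e m)
        = (∑ j ∈ Finset.range L.length, if (∑ i, m i * vec (colN L j) i) ≠ 0 then 1 else 0 : ℕ)
          + q • 16 := by
      unfold wt
      rw [Finset.card_filter]
      have hshow : ∑ j : Fin n, (if e m j ≠ 0 then (1:ℕ) else 0)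
          = ∑ j : Fin n, (fun c => if (∑ i, m i * vec c i) ≠ 0 then (1:ℕ) else 0) (colN L (j : ℕ)) :=
        rfl
      rw [hshow, Fin.sum_univ_eq_sum_range
        (fun j => if (∑ i, m i * vec (colN L j) i) ≠ 0 then (1:ℕ) else 0) n, hn,
        sum_colN L (fun c => if (∑ i, m i * vec c i) ≠ 0 then (1:ℕ) else 0) q,
        blockw m hm0]
    rw [hwt, smul_eq_mul, mul_comm]
    exact Nat.add_le_add (hw m hm0) le_rfl

-- base matrices
def L5 : List ℕ := [1, 2, 4, 8, 16]
def L7 : List ℕ := [3, 6, 10, 22, 13, 3, 20]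
def L11 : List ℕ := [27, 23, 22, 21, 15, 17, 20, 12, 7, 29, 31]
def L19 : List ℕ := [1, 22, 25, 13, 30, 11, 10, 20, 18, 19, 15, 9, 8, 3, 24, 12, 14, 27, 4]
def L20 : List ℕ := [13, 7, 30, 28, 23, 10, 6, 4, 19, 2, 20, 16, 12, 5, 11, 17, 9, 31, 29, 18]
def L22 : List ℕ := [31, 20, 27, 26, 28, 14, 3, 16, 5, 22, 7, 2, 23, 22, 13, 15, 9, 4, 8, 1, 29, 17]
def L26 : List ℕ := [22, 25, 21, 9, 13, 24, 19, 7, 11, 26, 1, 10, 18, 3, 6, 15, 28, 5, 28, 8, 20, 17, 30, 16, 23, 29]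
def L34 : List ℕ := [1, 2, 3, 4, 5, 27, 7, 8, 9, 10, 11, 12, 21, 14, 15, 16, 17, 18, 19, 20, 30, 22, 23, 24, 25, 26, 27, 12, 29, 30, 31, 24, 13, 16]

section BaseLemmas
set_option maxRecDepth 100000

lemma bw5 : ∀ m : Fin 5 → ZMod 2, m ≠ 0 →
    1 ≤ (∑ j ∈ Finset.range L5.length, if (∑ i, m i * vec (colN L5 j) i) ≠ 0 then 1 else 0 : ℕ) := by decide
lemma bg5 : ∀ m : Fin 5 → ZMod 2,
    (∀ i' : Fin 5, (∑ i, m i * (∑ j ∈ Finset.range L5.length, vec (colN L5 j) i * vec (colN L5 j) i')) = 0) → m = 0 := by decide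
lemma bw7 : ∀ m : Fin 5 → ZMod 2, m ≠ 0 →
    2 ≤ (∑ j ∈ Finset.range L7.length, if (∑ i, m i * vec (colN L7 j) i) ≠ 0 then 1 else 0 : ℕ) := by decide
lemma bg7 : ∀ m : Fin 5 → ZMod 2,
    (∀ i' : Fin 5, (∑ i, m i * (∑ j ∈ Finset.range L7.length, vec (colN L7 j) i * vec (colN L7 j) i')) = 0) → m = 0 := by decide
lemma bw11 : ∀ m : Fin 5 → ZMod 2, m ≠ 0 →
    4 ≤ (∑ j ∈ Finset.range L11.length, if (∑ i, m i * vec (colN L11 j) i) ≠ 0 then 1 else 0 : ℕ) := by decide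
lemma bg11 : ∀ m : Fin 5 → ZMod 2,
    (∀ i' : Fin 5, (∑ i, m i * (∑ j ∈ Finset.range L11.length, vec (colN L11 j) i * vec (colN L11 j) i')) = 0) → m = 0 := by decide
lemma bw19 : ∀ m : Fin 5 → ZMod 2, m ≠ 0 →
    8 ≤ (∑ j ∈ Finset.range L19.length, if (∑ i, m i * vec (colN L19 j) i) ≠ 0 then 1 else 0 : ℕ) := by decide
lemma bg19 : ∀ m : Fin 5 → ZMod 2,
    (∀ i' : Fin 5, (∑ i, m i * (∑ j ∈ Finset.range L19.length, vec (colN L19 j) i * vec (colN L19 j) i')) = 0) → m = 0 := by decide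
lemma bw20 : ∀ m : Fin 5 → ZMod 2, m ≠ 0 →
    9 ≤ (∑ j ∈ Finset.range L20.length, if (∑ i, m i * vec (colN L20 j) i) ≠ 0 then 1 else 0 : ℕ) := by decide
lemma bg20 : ∀ m : Fin 5 → ZMod 2,
    (∀ i' : Fin 5, (∑ i, m i * (∑ j ∈ Finset.range L20.length, vec (colN L20 j) i * vec (colN L20 j) i')) = 0) → m = 0 := by decide
lemma bw22 : ∀ m : Fin 5 → ZMod 2, m ≠ 0 →
    10 ≤ (∑ j ∈ Finset.range L22.length, if (∑ i, m i * vec (colN L22 j) i) ≠ 0 then 1 else 0 : ℕ) := by decide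
lemma bg22 : ∀ m : Fin 5 → ZMod 2,
    (∀ i' : Fin 5, (∑ i, m i * (∑ j ∈ Finset.range L22.length, vec (colN L22 j) i * vec (colN L22 j) i')) = 0) → m = 0 := by decide
lemma bw26 : ∀ m : Fin 5 → ZMod 2, m ≠ 0 →
    12 ≤ (∑ j ∈ Finset.range L26.length, if (∑ i, m i * vec (colN L26 j) i) ≠ 0 then 1 else 0 : ℕ) := by decide
lemma bg26 : ∀ m : Fin 5 → ZMod 2,
    (∀ i' : Fin 5, (∑ i, m i * (∑ j ∈ Finset.range L26.length, vec (colN L26 j) i * vec (colN L26 j) i')) = 0) → m = 0 := by decide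
lemma bw34 : ∀ m : Fin 5 → ZMod 2, m ≠ 0 →
    16 ≤ (∑ j ∈ Finset.range L34.length, if (∑ i, m i * vec (colN L34 j) i) ≠ 0 then 1 else 0 : ℕ) := by decide
lemma bg34 : ∀ m : Fin 5 → ZMod 2,
    (∀ i' : Fin 5, (∑ i, m i * (∑ j ∈ Finset.range L34.length, vec (colN L34 j) i * vec (colN L34 j) i')) = 0) → m = 0 := by decide

end BaseLemmas

theorem lcd_dim5_minusOne (n : ℕ) (hn : 5 ≤ n)
    (h : n % 31 = 3 ∨ n % 31 = 5 ∨ n % 31 = 7 ∨ n % 31 = 11 ∨ n % 31 = 19 ∨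
      n % 31 = 20 ∨ n % 31 = 22 ∨ n % 31 = 26) :
    dLCD n 5 = 16 * n / 31 - 1 := by
  set D := 16 * n / 31 - 1 with hD
  -- upper bound from the Griesmer bound
  have hub : ∀ C : Submodule (ZMod 2) (Fin n → ZMod 2),
      Module.finrank (ZMod 2) C = 5 → ∃ x ∈ C, x ≠ 0 ∧ wt x ≤ D := by
    intro C hC
    by_contra hcon
    push_neg at hcon
    have hG := griesmer 5 (Fin n) C (D + 1) (le_of_eq hC.symm) ?_
    · rw [Fintype.card_fin] at hG
      simp only [Finset.sum_range_succ, Finset.sum_range_zero] at hG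
      norm_num at hG
      rcases h with h | h | h | h | h | h | h | h <;> omega
    · intro y hy hy0
      have h1 := hcon y hy hy0
      have h2 : wt y = wt' y := rfl
      omega
  -- lower bound: an explicit LCD code
  have hex : ∃ C : Submodule (ZMod 2) (Fin n → ZMod 2),
      Module.finrank (ZMod 2) C = 5 ∧ IsLCD C ∧ (∀ y ∈ C, y ≠ 0 → D ≤ wt y) := by
    rcases h with h | h | h | h | h | h | h | h
    · obtain ⟨q, hq⟩ : ∃ q, n = 34 + 31 * q := ⟨(n - 34) / 31, by omega⟩
      obtain ⟨C, h1, h2, h3⟩ := construct L34 16 bw34 bg34 q n (by rw [hq]; norm_num [L34])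
      exact ⟨C, h1, h2, fun y hy hy0 => le_trans (by omega) (h3 y hy hy0)⟩
    · obtain ⟨q, hq⟩ : ∃ q, n = 5 + 31 * q := ⟨(n - 5) / 31, by omega⟩
      obtain ⟨C, h1, h2, h3⟩ := construct L5 1 bw5 bg5 q n (by rw [hq]; norm_num [L5])
      exact ⟨C, h1, h2, fun y hy hy0 => le_trans (by omega) (h3 y hy hy0)⟩
    · obtain ⟨q, hq⟩ : ∃ q, n = 7 + 31 * q := ⟨(n - 7) / 31, by omega⟩
      obtain ⟨C, h1, h2, h3⟩ := construct L7 2 bw7 bg7 q n (by rw [hq]; norm_num [L7])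
      exact ⟨C, h1, h2, fun y hy hy0 => le_trans (by omega) (h3 y hy hy0)⟩
    · obtain ⟨q, hq⟩ : ∃ q, n = 11 + 31 * q := ⟨(n - 11) / 31, by omega⟩
      obtain ⟨C, h1, h2, h3⟩ := construct L11 4 bw11 bg11 q n (by rw [hq]; norm_num [L11])
      exact ⟨C, h1, h2, fun y hy hy0 => le_trans (by omega) (h3 y hy hy0)⟩
    · obtain ⟨q, hq⟩ : ∃ q, n = 19 + 31 * q := ⟨(n - 19) / 31, by omega⟩
      obtain ⟨C, h1, h2, h3⟩ := construct L19 8 bw19 bg19 q n (by rw [hq]; norm_num [L19])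
      exact ⟨C, h1, h2, fun y hy hy0 => le_trans (by omega) (h3 y hy hy0)⟩
    · obtain ⟨q, hq⟩ : ∃ q, n = 20 + 31 * q := ⟨(n - 20) / 31, by omega⟩
      obtain ⟨C, h1, h2, h3⟩ := construct L20 9 bw20 bg20 q n (by rw [hq]; norm_num [L20])
      exact ⟨C, h1, h2, fun y hy hy0 => le_trans (by omega) (h3 y hy hy0)⟩
    · obtain ⟨q, hq⟩ : ∃ q, n = 22 + 31 * q := ⟨(n - 22) / 31, by omega⟩
      obtain ⟨C, h1, h2, h3⟩ := construct L22 10 bw22 bg22 q n (by rw [hq]; norm_num [L22])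
      exact ⟨C, h1, h2, fun y hy hy0 => le_trans (by omega) (h3 y hy hy0)⟩
    · obtain ⟨q, hq⟩ : ∃ q, n = 26 + 31 * q := ⟨(n - 26) / 31, by omega⟩
      obtain ⟨C, h1, h2, h3⟩ := construct L26 12 bw26 bg26 q n (by rw [hq]; norm_num [L26])
      exact ⟨C, h1, h2, fun y hy hy0 => le_trans (by omega) (h3 y hy hy0)⟩
  obtain ⟨C, hC5, hCl, hClow⟩ := hex
  obtain ⟨x₀, hx₀C, hx₀0, hx₀w⟩ := hub C hC5
  have hminC : minWt C = D := by
    unfold minWt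
    apply le_antisymm
    · exact le_trans (Nat.sInf_le ⟨x₀, hx₀C, hx₀0, rfl⟩) hx₀w
    · obtain ⟨y, hyC, hy0, hyw⟩ :=
        Nat.sInf_mem (⟨wt x₀, x₀, hx₀C, hx₀0, rfl⟩ :
          Set.Nonempty {w | ∃ x ∈ C, x ≠ 0 ∧ wt x = w})
      rw [← hyw]
      exact hClow y hyC hy0
  have hbound : ∀ d ∈ {d | ∃ C' : Submodule (ZMod 2) (Fin n → ZMod 2),
      Module.finrank (ZMod 2) C' = 5 ∧ IsLCD C' ∧ minWt C' = d}, d ≤ D := by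
    rintro d ⟨C', hC'5, _, hC'min⟩
    obtain ⟨x, hxC, hx0, hxw⟩ := hub C' hC'5
    rw [← hC'min]
    exact le_trans (Nat.sInf_le ⟨x, hxC, hx0, rfl⟩) hxw
  have hmem : D ∈ {d | ∃ C' : Submodule (ZMod 2) (Fin n → ZMod 2),
      Module.finrank (ZMod 2) C' = 5 ∧ IsLCD C' ∧ minWt C' = d} := ⟨C, hC5, hCl, hminC⟩
  unfold dLCD
  exact le_antisymm (csSup_le ⟨D, hmem⟩ hbound) (le_csSup ⟨D, hbound⟩ hmem)
end

section
/- If n ≥ 4 and n ≡ 1, 7, 8, 11, 12 or 14 (mod 15), then the largest minimum weight d(n,4) among all binary LCD [n,4] codes satisfies d(n,4) = ⌊8n/15⌋ or d(n,4) = ⌊8n/15⌋ − 1. If n ≥ 4 and n ≡ 0 (mod 15), then d(n,4) = ⌊8n/15⌋, ⌊8n/15⌋ − 1 or ⌊8n/15⌋ − 2. -/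
/-!
Every coordinate of a binary `[n, 4]` code is nonzero in none or exactly half of its sixteen
codewords, so the fifteen nonzero codewords have total weight at most `8n`: this is the Plotkin
bound `15 d ≤ 8 n`. Conversely, appending to a generator matrix `A` of an LCD `[L, 4, d]` code
`t` copies of the generator matrix of the `[15, 4, 8]` simplex code adds `8t` to every nonzero
weight and, the simplex code being self-orthogonal, leaves the Gram matrix `A Aᵀ` unchanged. This
gives an LCD `[L + 15t, 4, d + 8t]` code, and seven small LCD codes cover the residues needed.
-/

open Finset Matrix

section Weight

variable {n : ℕ}

lemma wt_le (x : Fin n → ZMod 2) : wt x ≤ n :=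
  (card_filter_le _ _).trans_eq (card_fin n)

lemma wt_append {m : ℕ} (x : Fin n → ZMod 2) (y : Fin m → ZMod 2) :
    wt (Fin.append x y) = wt x + wt y := by
  simp only [wt, card_filter, Fin.sum_univ_add, Fin.append_left, Fin.append_right]

end Weight

section MinimumWeight

variable {n : ℕ} {C : Submodule (ZMod 2) (Fin n → ZMod 2)}

lemma minWt_le_wt {x : Fin n → ZMod 2} (hx : x ∈ C) (hx0 : x ≠ 0) : minWt C ≤ wt x :=
  Nat.sInf_le ⟨x, hx, hx0, rfl⟩

lemma le_minWt {d : ℕ} (hC : C ≠ ⊥) (h : ∀ x ∈ C, x ≠ 0 → d ≤ wt x) :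
    d ≤ minWt C := by
  obtain ⟨x, hx, hx0⟩ := (Submodule.ne_bot_iff C).mp hC
  exact le_csInf ⟨wt x, x, hx, hx0, rfl⟩ fun _ ⟨y, hy, hy0, hw⟩ => hw ▸ h y hy hy0

lemma minWt_le_length (C : Submodule (ZMod 2) (Fin n → ZMod 2)) : minWt C ≤ n := by
  by_cases hC : C = ⊥
  · simp [minWt, hC]
  · obtain ⟨x, hx, hx0⟩ := (Submodule.ne_bot_iff C).mp hC
    exact (minWt_le_wt hx hx0).trans (wt_le x)

end MinimumWeight

section Plotkin

variable {n : ℕ} (C : Submodule (ZMod 2) (Fin n → ZMod 2))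

lemma two_mul_card_coord_ne_zero_le [Fintype C] (j : Fin n) :
    2 * #{y : C | (y : Fin n → ZMod 2) j ≠ 0} ≤ Fintype.card C := by
  by_cases h : ∃ a ∈ C, a j ≠ 0
  · obtain ⟨a, ha, haj⟩ := h
    have nonzero_add_nonzero : ∀ u v : ZMod 2, u ≠ 0 → v ≠ 0 → u + v = 0 := by decide
    have hle :
        #{y : C | (y : Fin n → ZMod 2) j ≠ 0} ≤ #{y : C | ¬(y : Fin n → ZMod 2) j ≠ 0} :=
      card_le_card_of_injOn (· + ⟨a, ha⟩)
        (fun y hy => by simp_all) (add_left_injective _).injOn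
    have hsplit := card_filter_add_card_filter_not (s := univ)
      fun y : C => (y : Fin n → ZMod 2) j ≠ 0
    rw [card_univ] at hsplit
    omega
  · push Not at h
    simp [h]

lemma sum_wt_eq_sum_card_coord_ne_zero [Fintype C] :
    ∑ y : C, wt (y : Fin n → ZMod 2) = ∑ j, #{y : C | (y : Fin n → ZMod 2) j ≠ 0} :=
  sum_card_bipartiteAbove_eq_sum_card_bipartiteBelow _

lemma card_sub_one_mul_minWt_le_sum_wt [Fintype C] :
    (Fintype.card C - 1) * minWt C ≤ ∑ y : C, wt (y : Fin n → ZMod 2) :=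
  calc (Fintype.card C - 1) * minWt C = ∑ _y ∈ (univ : Finset C).erase 0, minWt C := by
        rw [sum_const, card_erase_of_mem (mem_univ _), card_univ, smul_eq_mul]
    _ ≤ ∑ y ∈ (univ : Finset C).erase 0, wt (y : Fin n → ZMod 2) :=
        sum_le_sum fun y hy => minWt_le_wt y.2 (by simpa using ne_of_mem_erase hy)
    _ ≤ ∑ y : C, wt (y : Fin n → ZMod 2) := sum_le_sum_of_subset (erase_subset _ _)

theorem two_mul_card_sub_one_mul_minWt_le :
    2 * ((Nat.card C - 1) * minWt C) ≤ Nat.card C * n := by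
  have := Fintype.ofFinite C
  calc 2 * ((Nat.card C - 1) * minWt C)
    _ ≤ ∑ j, 2 * #{y : C | (y : Fin n → ZMod 2) j ≠ 0} := by
        rw [← mul_sum, ← sum_wt_eq_sum_card_coord_ne_zero, Nat.card_eq_fintype_card]
        exact Nat.mul_le_mul_left 2 (card_sub_one_mul_minWt_le_sum_wt C)
    _ ≤ ∑ _j : Fin n, Fintype.card C := sum_le_sum fun j _ => two_mul_card_coord_ne_zero_le C j
    _ = Nat.card C * n := by simp [Nat.card_eq_fintype_card, mul_comm]

lemma fifteen_mul_minWt_le (hC : Module.finrank (ZMod 2) C = 4) : 15 * minWt C ≤ 8 * n := by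
  have hcard : Nat.card C = 16 := by
    rw [Module.natCard_eq_pow_finrank (K := ZMod 2), hC, Nat.card_zmod]
    rfl
  have := two_mul_card_sub_one_mul_minWt_le C
  rw [hcard] at this
  omega

end Plotkin

section LCDDistance

variable {n k : ℕ}

lemma minWt_le_dLCD {C : Submodule (ZMod 2) (Fin n → ZMod 2)}
    (hk : Module.finrank (ZMod 2) C = k) (hC : IsLCD C) : minWt C ≤ dLCD n k :=
  le_csSup ⟨n, by rintro _ ⟨C', -, -, rfl⟩; exact minWt_le_length C'⟩ ⟨C, hk, hC, rfl⟩

lemma dLCD_le {b : ℕ} (h : ∀ C : Submodule (ZMod 2) (Fin n → ZMod 2),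
    Module.finrank (ZMod 2) C = k → IsLCD C → minWt C ≤ b) : dLCD n k ≤ b :=
  csSup_le' <| by rintro _ ⟨C, hk, hC, rfl⟩; exact h C hk hC

lemma fifteen_mul_dLCD_four_le (n : ℕ) : 15 * dLCD n 4 ≤ 8 * n := by
  have : dLCD n 4 ≤ 8 * n / 15 := dLCD_le fun C hC _ =>
    (Nat.le_div_iff_mul_le (by norm_num)).2 (by linarith [fifteen_mul_minWt_le C hC])
  omega

end LCDDistance

section AppendCols

variable {R : Type*} [CommSemiring R] {k n m : ℕ}

def appendCols (G : Matrix (Fin k) (Fin n) R) (S : Matrix (Fin k) (Fin m) R) :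
    Matrix (Fin k) (Fin (n + m)) R :=
  of fun i => Fin.append (G i) (S i)

variable (G : Matrix (Fin k) (Fin n) R) (S : Matrix (Fin k) (Fin m) R)

lemma vecMul_appendCols (x : Fin k → R) :
    x ᵥ* appendCols G S = Fin.append (x ᵥ* G) (x ᵥ* S) := by
  ext j
  refine Fin.addCases (fun j => ?_) (fun j => ?_) j <;> simp [appendCols, vecMul, dotProduct]

lemma appendCols_mul_transpose :
    appendCols G S * (appendCols G S)ᵀ = G * Gᵀ + S * Sᵀ := by
  ext i i'
  simp [appendCols, mul_apply, Fin.sum_univ_add]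

end AppendCols

/-- The columns are the fifteen nonzero vectors of `F_2^4`. -/
def simplexGen : Matrix (Fin 4) (Fin 15) (ZMod 2) :=
  !![1,0,1,0,1,0,1,0,1,0,1,0,1,0,1;
     0,1,1,0,0,1,1,0,0,1,1,0,0,1,1;
     0,0,0,1,1,1,1,0,0,0,0,1,1,1,1;
     0,0,0,0,0,0,0,1,1,1,1,1,1,1,1]

lemma wt_vecMul_simplexGen : ∀ x : Fin 4 → ZMod 2, x ≠ 0 → wt (x ᵥ* simplexGen) = 8 := by
  decide

lemma simplexGen_mul_transpose : simplexGen * simplexGenᵀ = 0 := by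
  decide

section Generator

variable {k n : ℕ}

/-- The rows of `G` span an LCD code of minimum weight at least `d`: by Massey's criterion, the
row space is LCD as soon as the Gram matrix `G Gᵀ` is nonsingular. -/
structure IsLCDGenerator (G : Matrix (Fin k) (Fin n) (ZMod 2)) (d : ℕ) : Prop where
  le_wt : ∀ m ≠ 0, d ≤ wt (m ᵥ* G)
  gram_vecMul_eq_zero : ∀ m, m ᵥ* (G * Gᵀ) = 0 → m = 0

lemma dotProduct_vecMul_vecMul {R : Type*} [CommSemiring R] (G : Matrix (Fin k) (Fin n) R)
    (m m' : Fin k → R) :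
    (m ᵥ* G) ⬝ᵥ (m' ᵥ* G) = (m ᵥ* (G * Gᵀ)) ⬝ᵥ m' := by
  rw [← vecMul_vecMul, ← dotProduct_mulVec (m ᵥ* G) Gᵀ m', mulVec_transpose]

namespace IsLCDGenerator

variable {G : Matrix (Fin k) (Fin n) (ZMod 2)} {d : ℕ}

lemma injective (hG : IsLCDGenerator G d) : Function.Injective G.vecMulLinear := by
  rw [← LinearMap.ker_eq_bot, Submodule.eq_bot_iff]
  intro m hm
  apply hG.gram_vecMul_eq_zero
  rw [← vecMul_vecMul, show m ᵥ* G = 0 from hm, zero_vecMul]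

lemma isLCD (hG : IsLCDGenerator G d) : IsLCD (LinearMap.range G.vecMulLinear) := by
  rw [IsLCD, Submodule.eq_bot_iff]
  rintro _ ⟨⟨m, rfl⟩, horth⟩
  suffices m = 0 by simp [this]
  refine hG.gram_vecMul_eq_zero m (dotProduct_eq_zero_iff.mp fun m' => ?_)
  rw [← dotProduct_vecMul_vecMul]
  exact horth _ ⟨m', rfl⟩

lemma le_dLCD (hG : IsLCDGenerator G d) (hk : 0 < k) : d ≤ dLCD n k := by
  have hrank : Module.finrank (ZMod 2) (LinearMap.range G.vecMulLinear) = k := by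
    rw [LinearMap.finrank_range_of_inj hG.injective, Module.finrank_fin_fun]
  have hne : LinearMap.range G.vecMulLinear ≠ ⊥ := fun h => by
    rw [h, finrank_bot] at hrank
    omega
  refine le_trans ?_ (minWt_le_dLCD hrank hG.isLCD)
  refine le_minWt hne ?_
  rintro _ ⟨m, rfl⟩ hm
  exact hG.le_wt m (by rintro rfl; simp at hm)

lemma appendCols {m e : ℕ} (hG : IsLCDGenerator G d) {S : Matrix (Fin k) (Fin m) (ZMod 2)}
    (hS : ∀ x ≠ 0, e ≤ wt (x ᵥ* S)) (hSS : S * Sᵀ = 0) :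
    IsLCDGenerator (appendCols G S) (d + e) where
  le_wt x hx := by
    rw [vecMul_appendCols, wt_append]
    exact add_le_add (hG.le_wt x hx) (hS x hx)
  gram_vecMul_eq_zero := by
    rw [appendCols_mul_transpose, hSS, add_zero]
    exact hG.gram_vecMul_eq_zero

variable {L : ℕ} {A : Matrix (Fin 4) (Fin L) (ZMod 2)}

lemma exists_append_simplexGen (hA : IsLCDGenerator A d) (t : ℕ) :
    ∃ G : Matrix (Fin 4) (Fin (L + 15 * t)) (ZMod 2), IsLCDGenerator G (d + 8 * t) := by
  induction t with
  | zero => exact ⟨A, hA⟩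
  | succ t ih =>
    obtain ⟨G, hG⟩ := ih
    rw [show L + 15 * (t + 1) = L + 15 * t + 15 by ring,
      show d + 8 * (t + 1) = d + 8 * t + 8 by ring]
    exact ⟨_root_.appendCols G simplexGen,
      hG.appendCols (fun x hx => (wt_vecMul_simplexGen x hx).ge) simplexGen_mul_transpose⟩

lemma add_mul_le_dLCD_four (hA : IsLCDGenerator A d) (n t : ℕ) (hn : n = L + 15 * t) :
    d + 8 * t ≤ dLCD n 4 := by
  obtain ⟨G, hG⟩ := hA.exists_append_simplexGen t
  exact hn ▸ hG.le_dLCD (by norm_num)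

end IsLCDGenerator

end Generator

/- Generator matrices of LCD `[L, 4, ⌊8L/15⌋ - 1]` codes, and of an LCD `[15, 4, 6]` code. -/
def tail7 : Matrix (Fin 4) (Fin 7) (ZMod 2) :=
  !![0,0,1,0,0,0,1;
     1,0,1,1,0,0,0;
     1,1,0,1,1,0,0;
     0,1,1,0,0,1,1]

def tail8 : Matrix (Fin 4) (Fin 8) (ZMod 2) :=
  !![0,1,1,1,0,0,0,1;
     0,0,1,0,0,0,1,1;
     1,1,0,0,1,0,0,0;
     1,0,1,1,0,1,0,0]

def tail11 : Matrix (Fin 4) (Fin 11) (ZMod 2) :=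
  !![0,1,1,0,1,1,0,1,1,1,1;
     0,1,0,1,1,1,1,1,0,0,0;
     1,1,0,0,0,1,0,0,0,1,0;
     0,1,1,0,0,0,1,1,0,0,1]

def tail12 : Matrix (Fin 4) (Fin 12) (ZMod 2) :=
  !![0,1,0,1,0,1,1,1,1,1,1,1;
     1,0,1,0,0,1,0,1,0,1,0,0;
     1,1,0,0,0,1,1,0,0,1,1,0;
     0,1,1,0,1,1,0,0,1,0,1,1]

def tail14 : Matrix (Fin 4) (Fin 14) (ZMod 2) :=
  !![1,1,1,1,1,1,1,0,0,1,0,0,1,1;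
     0,0,0,1,0,1,0,0,1,1,1,0,1,0;
     1,0,1,1,0,1,0,0,0,0,0,1,1,0;
     1,1,1,0,1,1,1,1,1,1,1,1,1,0]

def tail15 : Matrix (Fin 4) (Fin 15) (ZMod 2) :=
  !![1,1,1,1,0,0,1,1,0,0,1,0,1,1,1;
     0,1,1,0,1,1,1,0,1,1,1,1,0,1,1;
     0,0,1,0,1,1,0,1,0,0,1,0,0,1,0;
     0,1,1,1,1,1,0,1,0,1,0,0,1,1,1]

def tail16 : Matrix (Fin 4) (Fin 16) (ZMod 2) :=
  !![1,0,0,1,1,1,0,1,0,1,1,1,1,0,0,0;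
     1,1,1,1,1,1,0,1,0,1,0,0,0,1,0,1;
     0,1,0,1,1,0,0,0,1,1,0,0,0,1,1,0;
     1,0,1,1,0,1,1,0,1,1,0,0,1,1,1,0]

lemma isLCDGenerator_tail7 : IsLCDGenerator tail7 2 :=
  ⟨by decide, by decide⟩

lemma isLCDGenerator_tail8 : IsLCDGenerator tail8 3 :=
  ⟨by decide, by decide⟩

lemma isLCDGenerator_tail11 : IsLCDGenerator tail11 4 :=
  ⟨by decide, by decide⟩

lemma isLCDGenerator_tail12 : IsLCDGenerator tail12 5 :=
  ⟨by decide, by decide⟩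

lemma isLCDGenerator_tail14 : IsLCDGenerator tail14 6 :=
  ⟨by decide, by decide⟩

lemma isLCDGenerator_tail15 : IsLCDGenerator tail15 6 :=
  ⟨by decide, by decide⟩

lemma isLCDGenerator_tail16 : IsLCDGenerator tail16 7 :=
  ⟨by decide, by decide⟩

theorem lcd_dim4_twoOrThreeValues (n : ℕ) (hn : 4 ≤ n) :
    ((n % 15 = 1 ∨ n % 15 = 7 ∨ n % 15 = 8 ∨ n % 15 = 11 ∨ n % 15 = 12 ∨ n % 15 = 14) →
      dLCD n 4 = 8 * n / 15 ∨ dLCD n 4 = 8 * n / 15 - 1) ∧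
    (n % 15 = 0 →
      dLCD n 4 = 8 * n / 15 ∨ dLCD n 4 = 8 * n / 15 - 1 ∨ dLCD n 4 = 8 * n / 15 - 2) := by
  have upper := fifteen_mul_dLCD_four_le n
  refine ⟨fun h => ?_, fun h => ?_⟩
  · rcases h with h | h | h | h | h | h
    · have := isLCDGenerator_tail16.add_mul_le_dLCD_four n (n / 15 - 1) (by omega)
      omega
    · have := isLCDGenerator_tail7.add_mul_le_dLCD_four n (n / 15) (by omega)
      omega
    · have := isLCDGenerator_tail8.add_mul_le_dLCD_four n (n / 15) (by omega)
      omega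
    · have := isLCDGenerator_tail11.add_mul_le_dLCD_four n (n / 15) (by omega)
      omega
    · have := isLCDGenerator_tail12.add_mul_le_dLCD_four n (n / 15) (by omega)
      omega
    · have := isLCDGenerator_tail14.add_mul_le_dLCD_four n (n / 15) (by omega)
      omega
  · have := isLCDGenerator_tail15.add_mul_le_dLCD_four n (n / 15 - 1) (by omega)
    omega
end
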